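/- Let (g, g̃) be any pair of metrics on a nonempty open set U ⊆ ℝ^n, let Ω be a smooth nowhere-vanishing real function on U, and set h = Ω²g and h̃ = Ω²g̃. Then the multiplication ∘_h associated to the pair (h, h̃) and the multiplication ∘_g associated to the pair (g, g̃) are related, for all 1-forms α and β on U, by: α ∘_h β = Ω^{−2}·[α ∘_g β + g*(β, dΩ/Ω)·α − g̃*(β, dΩ/Ω)·g̃(g*α)]. -/

import Mathlib

open scoped BigOperators

noncomputable section

/-- Points of ℝⁿ. -/
abbrev Pt (n : ℕ) := Fin n → ℝ
/-- Vector fields (globally defined functions; conditions are imposed on an open set). -/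
abbrev VF (n : ℕ) := Pt n → Fin n → ℝ
/-- 1-forms. -/
abbrev OneForm (n : ℕ) := Pt n → Fin n → ℝ
/-- Metrics: smooth maps into symmetric invertible matrices. -/
abbrev Met (n : ℕ) := Pt n → Matrix (Fin n) (Fin n) ℝ
/-- (1,2)-tensor fields (multiplications on tangent vectors): components `c t k i j` = c^k_{ij}(t). -/
abbrev Mul2 (n : ℕ) := Pt n → Fin n → Fin n → Fin n → ℝ

variable {n : ℕ}

/-- Partial derivative ∂ᵢ f (t). -/
def pder (i : Fin n) (f : Pt n → ℝ) (t : Pt n) : ℝ :=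
  fderiv ℝ f t (Pi.single i 1)

/-- Smoothness (on `U`) of a vector field or a 1-form. -/
def SmoothVF (U : Set (Pt n)) (X : VF n) : Prop :=
  ∀ k, ContDiffOn ℝ (⊤ : ℕ∞) (fun t => X t k) U

def SmoothMet (U : Set (Pt n)) (g : Met n) : Prop :=
  ∀ i j, ContDiffOn ℝ (⊤ : ℕ∞) (fun t => g t i j) U

def SmoothMul2 (U : Set (Pt n)) (c : Mul2 n) : Prop :=
  ∀ k i j, ContDiffOn ℝ (⊤ : ℕ∞) (fun t => c t k i j) U

/-- `g` is a (pseudo-Riemannian) metric on `U`: smooth, symmetric, invertible. -/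
def IsMetricOn (U : Set (Pt n)) (g : Met n) : Prop :=
  SmoothMet U g ∧ ∀ t ∈ U, (g t).IsSymm ∧ IsUnit (g t)

/-- The 1-form g(X). -/
def mdown (g : Met n) (X : VF n) : OneForm n := fun t k => ∑ j, g t k j * X t j
/-- The vector field g*α. -/
def mup (g : Met n) (α : OneForm n) : VF n := fun t k => ∑ j, (g t)⁻¹ k j * α t j
/-- g*(α, β). -/
def mup2 (g : Met n) (α β : OneForm n) (t : Pt n) : ℝ :=
  ∑ i, ∑ j, (g t)⁻¹ i j * α t i * β t j
/-- g(X, Y). -/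
def mdown2 (g : Met n) (X Y : VF n) (t : Pt n) : ℝ :=
  ∑ i, ∑ j, g t i j * X t i * Y t j

/-- Christoffel symbols Γ(g)^k_{ij}(t). -/
def chr (g : Met n) (k i j : Fin n) (t : Pt n) : ℝ :=
  (1/2) * ∑ l, (g t)⁻¹ k l *
    (pder i (fun s => g s j l) t + pder j (fun s => g s i l) t - pder l (fun s => g s i j) t)

/-- Levi-Civita covariant derivative ∇^g_X Y of a vector field. -/
def covV (g : Met n) (X Y : VF n) : VF n :=
  fun t k => ∑ i, X t i * (pder i (fun s => Y s k) t + ∑ m, chr g k i m t * Y t m)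

/-- Levi-Civita covariant derivative ∇^g_X α of a 1-form. -/
def covF (g : Met n) (X : VF n) (α : OneForm n) : OneForm n :=
  fun t k => ∑ i, X t i * (pder i (fun s => α s k) t - ∑ m, chr g m i k t * α t m)

/-- Lie bracket [X, Y]. -/
def vbr (X Y : VF n) : VF n :=
  fun t k => ∑ i, (X t i * pder i (fun s => Y s k) t - Y t i * pder i (fun s => X s k) t)

/-- Curvature R(g)_{X,Y} Z = ∇_X ∇_Y Z − ∇_Y ∇_X Z − ∇_{[X,Y]} Z. -/
def curvV (g : Met n) (X Y Z : VF n) : VF n :=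
  fun t k => covV g X (covV g Y Z) t k - covV g Y (covV g X Z) t k
    - covV g (vbr X Y) Z t k

/-- Curvature acting on 1-forms: (R(g)_{X,Y} α)(Z) = −α(R(g)_{X,Y} Z). -/
def curvF (g : Met n) (X Y : VF n) (α : OneForm n) : OneForm n :=
  fun t k => - ∑ m, α t m * curvV g X Y (fun _ => Pi.single k 1) t m

/-- `g` is flat on `U`: the curvature tensor vanishes identically. -/
def FlatOn (U : Set (Pt n)) (g : Met n) : Prop :=
  ∀ X Y Z : VF n, SmoothVF U X → SmoothVF U Y → SmoothVF U Z →
    ∀ t ∈ U, ∀ k, curvV g X Y Z t k = 0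

/-- `g` has constant sectional curvature `s` on `U`. -/
def ConstSecCurv (U : Set (Pt n)) (g : Met n) (s : ℝ) : Prop :=
  ∀ X Y : VF n, SmoothVF U X → SmoothVF U Y → ∀ t ∈ U,
    mdown2 g (curvV g X Y Y) X t
      = s * (mdown2 g X X t * mdown2 g Y Y t - (mdown2 g X Y t) ^ 2)

/-- The metric g_λ of the pencil: its inverse matrix is g⁻¹ + λ g̃⁻¹. -/
def pencil (g g' : Met n) (lam : ℝ) : Met n :=
  fun t => ((g t)⁻¹ + lam • (g' t)⁻¹)⁻¹

/-- Almost compatibility of the pair (g, g̃) on `U`. -/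
def AlmostCompatible (U : Set (Pt n)) (g g' : Met n) : Prop :=
  ∀ lam : ℝ, (∀ t ∈ U, IsUnit ((g t)⁻¹ + lam • (g' t)⁻¹)) →
    ∀ X : VF n, SmoothVF U X → ∀ α : OneForm n, SmoothVF U α →
      ∀ t ∈ U, ∀ k,
        mup (pencil g g' lam) (covF (pencil g g' lam) X α) t k
          = mup g (covF g X α) t k + lam * mup g' (covF g' X α) t k

/-- Compatibility of the pair (g, g̃) on `U`. -/
def Compatible (U : Set (Pt n)) (g g' : Met n) : Prop :=
  AlmostCompatible U g g' ∧
  ∀ lam : ℝ, (∀ t ∈ U, IsUnit ((g t)⁻¹ + lam • (g' t)⁻¹)) →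
    ∀ X Y : VF n, SmoothVF U X → SmoothVF U Y →
      ∀ α : OneForm n, SmoothVF U α →
        ∀ t ∈ U, ∀ k,
          mup (pencil g g' lam) (curvF (pencil g g' lam) X Y α) t k
            = mup g (curvF g X Y α) t k + lam * mup g' (curvF g' X Y α) t k

/-- The multiplication α ∘ β = ∇^g_{g*α} β − ∇^{g̃}_{g*α} β on 1-forms. -/
def circM (g g' : Met n) (α β : OneForm n) : OneForm n :=
  fun t k => covF g (mup g α) β t k - covF g' (mup g α) β t k

/-- The endomorphism T(u) = g(E) ∘ u of 1-forms, as a pointwise matrix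
(`∘` being tensorial in its second argument). -/
def Tmat (g g' : Met n) (E : VF n) (t : Pt n) : Matrix (Fin n) (Fin n) ℝ :=
  Matrix.of fun k m => circM g g' (mdown g E) (fun _ => Pi.single m 1) t k

/-- The triple (g, g̃, E) is regular on `U` if T is invertible at every point. -/
def RegularTriple (U : Set (Pt n)) (g g' : Met n) (E : VF n) : Prop :=
  ∀ t ∈ U, IsUnit (Tmat g g' E t)

/-- T⁻¹(v). -/
def TinvF (g g' : Met n) (E : VF n) (v : OneForm n) : OneForm n :=
  fun t k => ∑ m, (Tmat g g' E t)⁻¹ k m * v t m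

/-- The multiplication u • v = u ∘ T⁻¹(v) on 1-forms. -/
def bulF (g g' : Met n) (E : VF n) (u v : OneForm n) : OneForm n :=
  circM g g' u (TinvF g g' E v)

/-- The multiplication • on vector fields: X • Y = g̃*((g̃X) • (g̃Y)). -/
def bulV (g g' : Met n) (E : VF n) (X Y : VF n) : VF n :=
  mup g' (bulF g g' E (mdown g' X) (mdown g' Y))

/-- The multiplication • associated to the regular triple (g, g̃, E), as a (1,2)-tensor. -/
def bulMul (g g' : Met n) (E : VF n) : Mul2 n :=
  fun t k i j => bulV g g' E (fun _ => Pi.single i 1) (fun _ => Pi.single j 1) t k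

/-- Applying a (1,2)-tensor to vector fields. -/
def mapp (c : Mul2 n) (X Y : VF n) : VF n :=
  fun t k => ∑ i, ∑ j, c t k i j * X t i * Y t j

/-- Transporting a multiplication on tangent vectors to a multiplication
on 1-forms via the metric: u • v := g̃((g̃*u) • (g̃*v)). -/
def formMul (g' : Met n) (c : Mul2 n) (u v : OneForm n) : OneForm n :=
  mdown g' (mapp c (mup g' u) (mup g' v))

/-- Lie derivative of a function. -/
def lieFun (E : VF n) (φ : Pt n → ℝ) : Pt n → ℝ :=
  fun t => ∑ i, E t i * pder i φ t

/-- Lie derivative of a 1-form: (L_E α)(X) = E(α(X)) − α([E,X]). -/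
def lieOne (E : VF n) (α : OneForm n) : OneForm n :=
  fun t k => (∑ i, E t i * pder i (fun s => α s k) t) + ∑ i, α t i * pder k (fun s => E s i) t

/-- Lie derivative of a metric: (L_E g)(X,Y) = E(g(X,Y)) − g([E,X],Y) − g(X,[E,Y]). -/
def lieMet (E : VF n) (g : Met n) : Met n := fun t =>
  Matrix.of fun k j =>
    (∑ i, E t i * pder i (fun s => g s k j) t)
    + (∑ i, g t i j * pder k (fun s => E s i) t)
    + (∑ i, g t k i * pder j (fun s => E s i) t)

/-- Lie derivative of a multiplication ((1,2)-tensor):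
(L_E c)(u,v) = L_E(c(u,v)) − c(L_E u, v) − c(u, L_E v), componentwise. -/
def lieMul (E : VF n) (c : Mul2 n) : Mul2 n :=
  fun t k i j =>
    vbr E (mapp c (fun _ => Pi.single i 1) (fun _ => Pi.single j 1)) t k
    - mapp c (vbr E (fun _ => Pi.single i 1)) (fun _ => Pi.single j 1) t k
    - mapp c (fun _ => Pi.single i 1) (vbr E (fun _ => Pi.single j 1)) t k

/-- Lie derivative of a multiplication on 1-forms (applied to the pencil multiplication ∘). -/
def lieCirc (E : VF n) (g g' : Met n) (u v : OneForm n) : OneForm n :=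
  fun t k => lieOne E (circM g g' u v) t k - circM g g' (lieOne E u) v t k
    - circM g g' u (lieOne E v) t k

/-- ∇^g_X(•)(Y,Z) := ∇^g_X(Y•Z) − (∇^g_X Y)•Z − Y•(∇^g_X Z), for a multiplication c. -/
def covMul (g : Met n) (c : Mul2 n) (X Y Z : VF n) : VF n :=
  fun t k => covV g X (mapp c Y Z) t k - mapp c (covV g X Y) Z t k
    - mapp c Y (covV g X Z) t k

/-- The (4,0)-tensor ∇^g(•)(X,Y,Z,V) := g(∇^g_X(•)(Y,Z), V). -/
def covMul4 (g : Met n) (c : Mul2 n) (X Y Z V : VF n) (t : Pt n) : ℝ :=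
  mdown2 g (covMul g c X Y Z) V t

/-- Total symmetry of the (4,0)-tensor ∇^g(•) (the F-manifold condition). -/
def TotSym (U : Set (Pt n)) (g : Met n) (c : Mul2 n) : Prop :=
  ∀ X Y Z V : VF n, SmoothVF U X → SmoothVF U Y → SmoothVF U Z → SmoothVF U V →
    ∀ t ∈ U,
      covMul4 g c X Y Z V t = covMul4 g c Y X Z V t ∧
      covMul4 g c X Y Z V t = covMul4 g c X Z Y V t ∧
      covMul4 g c X Y Z V t = covMul4 g c X Y V Z t

/-- Weak F-manifold structure (U, •, g̃, E), with identity `e`, •-inverse `Einv` of E,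
and rescaling functions `Dt` (for the metric) and `k` (for the multiplication). -/
structure IsWeakF (U : Set (Pt n)) (c : Mul2 n) (g' : Met n) (E e Einv : VF n)
    (Dt k : Pt n → ℝ) : Prop where
  met : IsMetricOn U g'
  smooth_c : SmoothMul2 U c
  smooth_E : SmoothVF U E
  smooth_e : SmoothVF U e
  smooth_Einv : SmoothVF U Einv
  smooth_Dt : ContDiffOn ℝ (⊤ : ℕ∞) Dt U
  smooth_k : ContDiffOn ℝ (⊤ : ℕ∞) k U
  comm : ∀ t ∈ U, ∀ a i j, c t a i j = c t a j i
  assoc : ∀ t ∈ U, ∀ a x y z, (∑ m, c t a m z * c t m x y) = ∑ m, c t a x m * c t m y z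
  unit : ∀ t ∈ U, ∀ a i, (∑ j, c t a j i * e t j) = if a = i then (1 : ℝ) else 0
  invar : ∀ t ∈ U, ∀ x y z, (∑ m, g' t m z * c t m x y) = ∑ m, g' t x m * c t m y z
  lie_g : ∀ t ∈ U, ∀ i j, lieMet E g' t i j = Dt t * g' t i j
  lie_c : ∀ t ∈ U, ∀ a i j, lieMul E c t a i j = k t * c t a i j
  e_inv : ∀ t ∈ U, ∀ a, (∑ i, ∑ j, c t a i j * E t i * Einv t j) = e t a
  sym_E : ∀ Y Z V : VF n, SmoothVF U Y → SmoothVF U Z → SmoothVF U V → ∀ t ∈ U,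
    covMul4 g' c E Y Z V t = covMul4 g' c Y E Z V t

/-- Weak quasi-homogeneous pencil (h, h̃) with Euler vector field E. -/
structure IsWQH (U : Set (Pt n)) (h h' : Met n) (E : VF n) (D Dt : Pt n → ℝ) : Prop where
  met_h : IsMetricOn U h
  met_h' : IsMetricOn U h'
  compat : Compatible U h h'
  smooth_E : SmoothVF U E
  smooth_D : ContDiffOn ℝ (⊤ : ℕ∞) D U
  smooth_Dt : ContDiffOn ℝ (⊤ : ℕ∞) Dt U
  lie_h' : ∀ t ∈ U, ∀ i j, lieMet E h' t i j = Dt t * h' t i j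
  cov_E : ∀ X : VF n, SmoothVF U X → ∀ t ∈ U, ∀ a, covV h X E t a = (D t / 2) * X t a
  diff_const : ∃ c₀ : ℝ, ∀ t ∈ U, Dt t - D t = c₀

/-- Frobenius manifold structure (U, •, g̃, E). -/
structure IsFrob (U : Set (Pt n)) (c : Mul2 n) (g' : Met n) (E e : VF n) (D k : ℝ) : Prop where
  met : IsMetricOn U g'
  flat : FlatOn U g'
  smooth_c : SmoothMul2 U c
  smooth_E : SmoothVF U E
  smooth_e : SmoothVF U e
  comm : ∀ t ∈ U, ∀ a i j, c t a i j = c t a j i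
  assoc : ∀ t ∈ U, ∀ a x y z, (∑ m, c t a m z * c t m x y) = ∑ m, c t a x m * c t m y z
  unit : ∀ t ∈ U, ∀ a i, (∑ j, c t a j i * e t j) = if a = i then (1 : ℝ) else 0
  invar : ∀ t ∈ U, ∀ x y z, (∑ m, g' t m z * c t m x y) = ∑ m, g' t x m * c t m y z
  e_par : ∀ X : VF n, SmoothVF U X → ∀ t ∈ U, ∀ a, covV g' X e t a = 0
  tot_sym : TotSym U g' c
  nabla2E : ∀ X Y : VF n, SmoothVF U X → SmoothVF U Y → ∀ t ∈ U, ∀ a,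
    covV g' X (covV g' Y E) t a - covV g' (covV g' X Y) E t a = 0
  lie_g : ∀ t ∈ U, ∀ i j, lieMet E g' t i j = D * g' t i j
  lie_c : ∀ t ∈ U, ∀ a i j, lieMul E c t a i j = k * c t a i j

/-- The intersection metric `g` of a Frobenius manifold: g*g̃ = E•, together with
its standard properties. -/
structure IsIntersection (U : Set (Pt n)) (c : Mul2 n) (g g' : Met n) (E : VF n)
    (d : ℝ) : Prop where
  met : IsMetricOn U g
  defn : ∀ t ∈ U, ∀ a j, (∑ l, (g t)⁻¹ a l * g' t l j) = ∑ i, c t a i j * E t i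
  lie_g : ∀ t ∈ U, ∀ i j, lieMet E g t i j = (1 - d) * g t i j
  compat : Compatible U g g'
  regular : RegularTriple U g g' E
  mul_eq : ∀ t ∈ U, ∀ a i j, bulMul g g' E t a i j = c t a i j


section StmtAux
variable {n : ℕ}

lemma diffAt_of_contDiffOn {U : Set (Pt n)} (hU : IsOpen U) {f : Pt n → ℝ}
    (hf : ContDiffOn ℝ (⊤ : ℕ∞) f U) {t : Pt n} (ht : t ∈ U) : DifferentiableAt ℝ f t :=
  (hf.contDiffAt (hU.mem_nhds ht)).differentiableAt (by simp)

lemma pder_mul (i : Fin n) {f h : Pt n → ℝ} {t : Pt n}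
    (hf : DifferentiableAt ℝ f t) (hh : DifferentiableAt ℝ h t) :
    pder i (fun s => f s * h s) t = pder i f t * h t + f t * pder i h t := by
  unfold pder
  rw [fderiv_fun_mul hf hh]
  simp only [ContinuousLinearMap.add_apply, ContinuousLinearMap.smul_apply, smul_eq_mul]
  ring

lemma smul_met_inv {t : Pt n} {g : Met n} (hdet : IsUnit (g t).det) {c : ℝ} (hc : c ≠ 0) :
    (c • g t)⁻¹ = c⁻¹ • (g t)⁻¹ := by
  refine Matrix.inv_eq_right_inv ?_
  rw [Matrix.smul_mul, Matrix.mul_smul, smul_smul, mul_inv_cancel₀ hc, one_smul,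
    Matrix.mul_nonsing_inv _ hdet]

lemma inv_mul_delta {t : Pt n} {g : Met n} (hsym : (g t).IsSymm) (hdet : IsUnit (g t).det)
    (k b : Fin n) : (∑ l, (g t)⁻¹ k l * g t b l) = if k = b then 1 else 0 := by
  calc (∑ l, (g t)⁻¹ k l * g t b l) = ∑ l, (g t)⁻¹ k l * g t l b := by
        refine Finset.sum_congr rfl fun l _ => ?_
        rw [hsym.apply b l]
    _ = ((g t)⁻¹ * g t) k b := by rw [Matrix.mul_apply]
    _ = (1 : Matrix (Fin n) (Fin n) ℝ) k b := by rw [Matrix.nonsing_inv_mul _ hdet]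
    _ = if k = b then 1 else 0 := Matrix.one_apply

lemma chr_conf {U : Set (Pt n)} (hU : IsOpen U) {g : Met n} (hg : SmoothMet U g)
    {Ω : Pt n → ℝ} (hΩ : ContDiffOn ℝ (⊤ : ℕ∞) Ω U)
    {t : Pt n} (ht : t ∈ U) (hΩt : Ω t ≠ 0) (hsym : (g t).IsSymm) (hdet : IsUnit (g t).det)
    (k i j : Fin n) :
    chr (fun s => Ω s ^ 2 • g s) k i j t
      = chr g k i j t
        + (pder i Ω t / Ω t) * (if k = j then 1 else 0)
        + (pder j Ω t / Ω t) * (if k = i then 1 else 0)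
        - g t i j * ∑ l, (g t)⁻¹ k l * (pder l Ω t / Ω t) := by
  have h2 : Ω t ^ 2 ≠ 0 := pow_ne_zero 2 hΩt
  have hdg : ∀ a b : Fin n, DifferentiableAt ℝ (fun s => g s a b) t :=
    fun a b => diffAt_of_contDiffOn hU (hg a b) ht
  have hdΩ : DifferentiableAt ℝ Ω t := diffAt_of_contDiffOn hU hΩ ht
  have hdΩ2 : DifferentiableAt ℝ (fun s => Ω s ^ 2) t := hdΩ.pow 2
  have hpΩ2 : ∀ a : Fin n, pder a (fun s => Ω s ^ 2) t = 2 * Ω t * pder a Ω t := by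
    intro a
    have h1 : (fun s => Ω s ^ 2) = fun s => Ω s * Ω s := by ext s; ring
    rw [h1, pder_mul a hdΩ hdΩ]; ring
  have hpent : ∀ a b c : Fin n, pder a (fun s => Ω s ^ 2 * g s b c) t
      = 2 * Ω t * pder a Ω t * g t b c + Ω t ^ 2 * pder a (fun s => g s b c) t := by
    intro a b c
    rw [pder_mul a hdΩ2 (hdg b c), hpΩ2]
  unfold chr
  rw [show ((fun s => Ω s ^ 2 • g s) t) = Ω t ^ 2 • g t from rfl,
    smul_met_inv hdet h2]
  simp only [Matrix.smul_apply, smul_eq_mul]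
  simp only [hpent]
  rw [← inv_mul_delta hsym hdet k j, ← inv_mul_delta hsym hdet k i]
  simp only [Finset.mul_sum]
  rw [← Finset.sum_add_distrib, ← Finset.sum_add_distrib, ← Finset.sum_sub_distrib]
  refine Finset.sum_congr rfl fun l _ => ?_
  field_simp
  ring

lemma covF_diff (p q : Met n) (X : VF n) (β : OneForm n) (t : Pt n) (a : Fin n) :
    covF p X β t a - covF q X β t a
      = ∑ i, X t i * ((∑ m, chr q m i a t * β t m) - (∑ m, chr p m i a t * β t m)) := by
  unfold covF
  rw [← Finset.sum_sub_distrib]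
  refine Finset.sum_congr rfl fun i _ => ?_
  ring

end StmtAux

/-- Under conformal rescaling h = Ω²g, h̃ = Ω²g̃, the multiplications ∘
associated to the two pairs are related by
α ∘_h β = Ω⁻²[α ∘_g β + g*(β, dΩ/Ω) α − g̃*(β, dΩ/Ω) g̃(g*α)]. -/
theorem stmt18 {n : ℕ} (U : Set (Pt n)) (hUopen : IsOpen U) (hUne : U.Nonempty)
    (g g' : Met n) (hmet : IsMetricOn U g) (hmet' : IsMetricOn U g')
    (Ω : Pt n → ℝ) (hΩ : ContDiffOn ℝ (⊤ : ℕ∞) Ω U) (hΩ0 : ∀ t ∈ U, Ω t ≠ 0) :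
    ∀ α β : OneForm n, SmoothVF U α → SmoothVF U β → ∀ t ∈ U, ∀ a,
      circM (fun s => (Ω s) ^ 2 • g s) (fun s => (Ω s) ^ 2 • g' s) α β t a
        = ((Ω t) ^ 2)⁻¹ *
            (circM g g' α β t a
              + mup2 g β (fun s i => pder i Ω s / Ω s) t * α t a
              - mup2 g' β (fun s i => pder i Ω s / Ω s) t * mdown g' (mup g α) t a) := by
  intro α β hα hβ t ht a
  obtain ⟨hgsm, hgpt⟩ := hmet
  obtain ⟨hg'sm, hg'pt⟩ := hmet'
  obtain ⟨hsym, hunit⟩ := hgpt t ht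
  obtain ⟨hsym', hunit'⟩ := hg'pt t ht
  have hΩt := hΩ0 t ht
  have h2 : Ω t ^ 2 ≠ 0 := pow_ne_zero 2 hΩt
  have hgdet : IsUnit (g t).det := (Matrix.isUnit_iff_isUnit_det _).mp hunit
  have hg'det : IsUnit (g' t).det := (Matrix.isUnit_iff_isUnit_det _).mp hunit'
  have hmuph : ∀ i, mup (fun s => Ω s ^ 2 • g s) α t i = (Ω t ^ 2)⁻¹ * mup g α t i := by
    intro i
    unfold mup
    rw [show ((fun s => Ω s ^ 2 • g s) t) = Ω t ^ 2 • g t from rfl, smul_met_inv hgdet h2,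
      Finset.mul_sum]
    refine Finset.sum_congr rfl fun j _ => ?_
    simp only [Matrix.smul_apply, smul_eq_mul]
    ring
  have key : ∀ (gm : Met n), SmoothMet U gm → (gm t).IsSymm → IsUnit (gm t).det →
      ∀ i : Fin n, (∑ m, chr (fun s => Ω s ^ 2 • gm s) m i a t * β t m)
        = (∑ m, chr gm m i a t * β t m)
          + (pder i Ω t / Ω t) * β t a + (pder a Ω t / Ω t) * β t i
          - gm t i a * mup2 gm β (fun s l => pder l Ω s / Ω s) t := by
    intro gm hsm hsy hdt i
    have step1 : (∑ m, chr (fun s => Ω s ^ 2 • gm s) m i a t * β t m)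
        = ∑ m, (chr gm m i a t * β t m
            + (pder i Ω t / Ω t) * ((if m = a then (1:ℝ) else 0) * β t m)
            + (pder a Ω t / Ω t) * ((if m = i then (1:ℝ) else 0) * β t m)
            - gm t i a * ((∑ l, (gm t)⁻¹ m l * (pder l Ω t / Ω t)) * β t m)) := by
      refine Finset.sum_congr rfl fun m _ => ?_
      rw [chr_conf hUopen hsm hΩ ht hΩt hsy hdt m i a]
      ring
    rw [step1]
    rw [Finset.sum_sub_distrib, Finset.sum_add_distrib, Finset.sum_add_distrib]
    congr 1
    · congr 1
      · congr 1
        · rw [← Finset.mul_sum]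
          congr 1
          simp
      · rw [← Finset.mul_sum]
        congr 1
        simp
    · rw [← Finset.mul_sum]
      congr 1
      unfold mup2
      refine Finset.sum_congr rfl fun m _ => ?_
      rw [Finset.sum_mul]
      refine Finset.sum_congr rfl fun l _ => ?_
      ring
  have hga : (∑ i, mup g α t i * g t i a) = α t a := by
    calc (∑ i, mup g α t i * g t i a)
        = ∑ j, (∑ i, g t a i * (g t)⁻¹ i j) * α t j := by
          unfold mup
          simp only [Finset.sum_mul]
          rw [Finset.sum_comm]
          refine Finset.sum_congr rfl fun j _ => ?_
          refine Finset.sum_congr rfl fun i _ => ?_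
          rw [hsym.apply i a]
          ring
      _ = ∑ j, ((g t * (g t)⁻¹) a j) * α t j := by
          refine Finset.sum_congr rfl fun j _ => ?_
          rw [Matrix.mul_apply]
      _ = α t a := by
          rw [Matrix.mul_nonsing_inv _ hgdet]
          simp [Matrix.one_apply]
  have hg'a : (∑ i, mup g α t i * g' t i a) = mdown g' (mup g α) t a := by
    unfold mdown
    refine Finset.sum_congr rfl fun i _ => ?_
    rw [hsym'.apply i a]
    ring
  calc circM (fun s => Ω s ^ 2 • g s) (fun s => Ω s ^ 2 • g' s) α β t a
      = ∑ i, mup (fun s => Ω s ^ 2 • g s) α t i *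
          ((∑ m, chr (fun s => Ω s ^ 2 • g' s) m i a t * β t m)
            - (∑ m, chr (fun s => Ω s ^ 2 • g s) m i a t * β t m)) := by
        unfold circM
        exact covF_diff _ _ _ _ t a
    _ = ∑ i, (Ω t ^ 2)⁻¹ * (mup g α t i *
          (((∑ m, chr g' m i a t * β t m) - (∑ m, chr g m i a t * β t m))
            + (mup2 g β (fun s l => pder l Ω s / Ω s) t) * (g t i a)
            - (mup2 g' β (fun s l => pder l Ω s / Ω s) t) * (g' t i a))) := by
        refine Finset.sum_congr rfl fun i _ => ?_
        rw [hmuph i, key g hgsm hsym hgdet i, key g' hg'sm hsym' hg'det i]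
        ring
    _ = ((Ω t) ^ 2)⁻¹ *
          ((∑ i, mup g α t i *
              ((∑ m, chr g' m i a t * β t m) - (∑ m, chr g m i a t * β t m)))
            + (mup2 g β (fun s l => pder l Ω s / Ω s) t) * (∑ i, mup g α t i * g t i a)
            - (mup2 g' β (fun s l => pder l Ω s / Ω s) t) * (∑ i, mup g α t i * g' t i a)) := by
        rw [Finset.mul_sum, Finset.mul_sum,
          ← Finset.sum_add_distrib, ← Finset.sum_sub_distrib, Finset.mul_sum]
        refine Finset.sum_congr rfl fun i _ => ?_
        ring
    _ = ((Ω t) ^ 2)⁻¹ *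
            (circM g g' α β t a
              + mup2 g β (fun s i => pder i Ω s / Ω s) t * α t a
              - mup2 g' β (fun s i => pder i Ω s / Ω s) t * mdown g' (mup g α) t a) := by
        rw [hga, hg'a]
        congr 2
        unfold circM
        rw [covF_diff g g' (mup g α) β t a]
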